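/- arXiv:2402.01232 — 2 statements merged into one kernel-verified Lean document; each statement's English description precedes it below -/
import Mathlib

section
/- Let a < b, let Φ : ℝ → ℝ^N be continuously differentiable, and let 𝓗 : ℝ → ℝ be continuous with 𝓗(ζ) > 0 on [a,b]. Define E = ∫_a^b Φ(ζ)Φ(ζ)ᵀ dζ, F = -Φ(a)Φ(a)ᵀ - ∫_a^b Φ'(ζ)Φ(ζ)ᵀ dζ, Q = ∫_a^b Φ(ζ)𝓗(ζ)Φ(ζ)ᵀ dζ, B = Φ(b), C = Φ(a). Suppose x_d, e_d : ℝ → ℝ^N and u : ℝ → ℝ are differentiable functions satisfying, for all t: E ẋ_d(t) = F e_d(t) + B u(t), E e_d(t) = Q x_d(t), and u(t) = Φ(b)ᵀ e_d(t); define the output y(t) = Cᵀ e_d(t) = Φ(a)ᵀ e_d(t). Then the discretized Hamiltonian H_d(t) = (1/2) x_d(t)ᵀ Q x_d(t) satisfies Ḣ_d(t) = (1/2)(u(t)² - y(t)²); that is, the finite element discretization preserves the scattering energy preserving structure of the transport equation. -/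
/-!
Testing the dynamics against `e_d` gives the power balance
`ẋ_dᵀ Q x_d = e_dᵀ E ẋ_d = e_dᵀ F e_d + u²`, using the symmetry of the Gram matrices `E` and `Q`
and the constitutive relation. In `e_dᵀ F e_d` the boundary term is `-y²`, and the stiffness term
`∫ φ' φ` with `φ = Φᵀ e_d` equals `(u² - y²) / 2` by the fundamental theorem of calculus: the
discrete counterpart of integrating `x ∂_ζ x` by parts.
-/

open Matrix intervalIntegral MeasureTheory

theorem Matrix.isSymm_of_intervalIntegral {n : Type*} {a b : ℝ} {K : ℝ → n → n → ℝ}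
    (hK : ∀ ζ i j, K ζ j i = K ζ i j) :
    (Matrix.of fun i j => ∫ ζ in a..b, K ζ i j).IsSymm :=
  IsSymm.ext fun i j => by simp only [of_apply, hK]

variable {n : Type*} [Fintype n]

theorem HasDerivAt.dotProduct {f g : ℝ → n → ℝ} {f' g' : n → ℝ} {t : ℝ}
    (hf : HasDerivAt f f' t) (hg : HasDerivAt g g' t) :
    HasDerivAt (fun s => f s ⬝ᵥ g s) (f' ⬝ᵥ g t + f t ⬝ᵥ g') t := by
  exact (HasDerivAt.fun_sum fun i _ =>
    (hasDerivAt_pi.1 hf i).fun_mul (hasDerivAt_pi.1 hg i)).congr_deriv Finset.sum_add_distrib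

theorem HasDerivAt.mulVec (A : Matrix n n ℝ) {g : ℝ → n → ℝ} {g' : n → ℝ} {t : ℝ}
    (hg : HasDerivAt g g' t) : HasDerivAt (fun s => A *ᵥ g s) (A *ᵥ g') t :=
  hasDerivAt_pi.2 fun i =>
    ((hasDerivAt_const t (A i)).dotProduct hg).congr_deriv (by rw [zero_dotProduct, zero_add]; rfl)

theorem Matrix.IsSymm.dotProduct_mulVec_comm {A : Matrix n n ℝ} (hA : A.IsSymm) (v w : n → ℝ) :
    v ⬝ᵥ (A *ᵥ w) = w ⬝ᵥ (A *ᵥ v) := by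
  rw [dotProduct_mulVec, ← hA.eq, vecMul_transpose, hA.eq, dotProduct_comm]

theorem HasDerivAt.dotProduct_mulVec_self {A : Matrix n n ℝ} (hA : A.IsSymm) {x : ℝ → n → ℝ}
    {x' : n → ℝ} {t : ℝ} (hx : HasDerivAt x x' t) :
    HasDerivAt (fun s => x s ⬝ᵥ (A *ᵥ x s)) (2 * (x' ⬝ᵥ (A *ᵥ x t))) t := by
  convert hx.dotProduct (hx.mulVec A) using 1
  rw [hA.dotProduct_mulVec_comm (x t)]
  ring

theorem dotProduct_vecMulVec_self_mulVec (v w : n → ℝ) :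
    v ⬝ᵥ (vecMulVec w w *ᵥ v) = (w ⬝ᵥ v) ^ 2 := by
  simp [vecMulVec_mulVec, dotProduct_comm v w, sq]

theorem dotProduct_intervalIntegral {a b : ℝ} (v : n → ℝ) {F : ℝ → n → ℝ}
    (hF : ∀ i, IntervalIntegrable (fun ζ => F ζ i) volume a b) :
    v ⬝ᵥ (fun i => ∫ ζ in a..b, F ζ i) = ∫ ζ in a..b, v ⬝ᵥ F ζ := by
  simp only [dotProduct, ← intervalIntegral.integral_const_mul]
  exact (integral_finsetSum fun i _ => (hF i).const_mul (v i)).symm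

theorem dotProduct_mulVec_intervalIntegral_mul {a b : ℝ} {f g : ℝ → n → ℝ}
    (hf : Continuous f) (hg : Continuous g) (v w : n → ℝ) :
    v ⬝ᵥ ((Matrix.of fun i j => ∫ ζ in a..b, f ζ i * g ζ j) *ᵥ w)
      = ∫ ζ in a..b, (v ⬝ᵥ f ζ) * (g ζ ⬝ᵥ w) := by
  have hfi : ∀ i, Continuous fun ζ => f ζ i := fun i => (continuous_apply i).comp hf
  have hgi : ∀ j, Continuous fun ζ => g ζ j := fun j => (continuous_apply j).comp hg
  have hgw : Continuous fun ζ => g ζ ⬝ᵥ w :=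
    continuous_finsetSum _ fun j _ => (hgi j).mul continuous_const
  have hmulVec : (Matrix.of fun i j => ∫ ζ in a..b, f ζ i * g ζ j) *ᵥ w
      = fun i => ∫ ζ in a..b, f ζ i * (g ζ ⬝ᵥ w) := by
    ext i
    rw [mulVec, dotProduct_comm]
    simp only [of_apply]
    rw [dotProduct_intervalIntegral w fun j => ((hfi i).fun_mul (hgi j)).intervalIntegrable a b]
    simp only [dotProduct, mul_left_comm (w _), ← Finset.mul_sum, mul_comm (w _)]
  rw [hmulVec, dotProduct_intervalIntegral v fun i => ((hfi i).fun_mul hgw).intervalIntegrable a b]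
  simp only [dotProduct, Finset.sum_mul, mul_assoc]

theorem intervalIntegral.integral_deriv_mul_self {a b : ℝ} {g g' : ℝ → ℝ}
    (hg : ∀ ζ ∈ Set.uIcc a b, HasDerivAt g (g' ζ) ζ) (hg' : IntervalIntegrable g' volume a b) :
    ∫ ζ in a..b, g' ζ * g ζ = (g b ^ 2 - g a ^ 2) / 2 := by
  rw [integral_eq_sub_of_hasDerivAt (f := fun ζ => g ζ ^ 2 / 2)
    (fun ζ hζ => (((hg ζ hζ).pow 2).div_const 2).congr_deriv (by ring))
    (hg'.mul_continuousOn (HasDerivAt.continuousOn hg))]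
  ring

theorem dotProduct_mulVec_intervalIntegral_deriv_mul {a b : ℝ} {Φ : ℝ → n → ℝ}
    (hΦ : ContDiff ℝ 1 Φ) (e : n → ℝ) :
    e ⬝ᵥ ((Matrix.of fun i j => ∫ ζ in a..b, deriv Φ ζ i * Φ ζ j) *ᵥ e)
      = ((Φ b ⬝ᵥ e) ^ 2 - (Φ a ⬝ᵥ e) ^ 2) / 2 := by
  rw [dotProduct_mulVec_intervalIntegral_mul (hΦ.continuous_deriv le_rfl) hΦ.continuous]
  simp only [dotProduct_comm e]
  refine integral_deriv_mul_self (fun ζ _ => ?_)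
    ((((hΦ.continuous_deriv le_rfl).dotProduct continuous_const)).intervalIntegrable a b)
  simpa only [dotProduct_zero, add_zero] using
    (hΦ.differentiable one_ne_zero ζ).hasDerivAt.dotProduct (hasDerivAt_const ζ e)

open Matrix in
theorem fem_transport1d_discrete_scattering_energy_balance_general
    (N : ℕ) (a b : ℝ)
    (Φ : ℝ → Fin N → ℝ) (hΦ : ContDiff ℝ 1 Φ)
    (𝓗 : ℝ → ℝ)
    (E F Q : Matrix (Fin N) (Fin N) ℝ) (B C : Fin N → ℝ)
    (hE : E = Matrix.of fun i j => ∫ ζ in a..b, Φ ζ i * Φ ζ j)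
    (hF : F = -vecMulVec (Φ a) (Φ a)
        - Matrix.of fun i j => ∫ ζ in a..b, deriv Φ ζ i * Φ ζ j)
    (hQ : Q = Matrix.of fun i j => ∫ ζ in a..b, Φ ζ i * 𝓗 ζ * Φ ζ j)
    (hB : B = Φ b) (hC : C = Φ a)
    (x_d e_d : ℝ → Fin N → ℝ) (u y : ℝ → ℝ)
    (hx_d : Differentiable ℝ x_d)
    (hdyn : ∀ t : ℝ, E *ᵥ deriv x_d t = F *ᵥ e_d t + u t • B)
    (hconstit : ∀ t : ℝ, E *ᵥ e_d t = Q *ᵥ x_d t)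
    (huin : ∀ t : ℝ, u t = Φ b ⬝ᵥ e_d t)
    (hy : ∀ t : ℝ, y t = C ⬝ᵥ e_d t) :
    ∀ t : ℝ, HasDerivAt (fun s => (1 / 2) * (x_d s ⬝ᵥ (Q *ᵥ x_d s)))
      ((1 / 2) * ((u t) ^ 2 - (y t) ^ 2)) t := by
  intro t
  have hEsymm : E.IsSymm := hE ▸ isSymm_of_intervalIntegral fun ζ i j => mul_comm _ _
  have hQsymm : Q.IsSymm := hQ ▸ isSymm_of_intervalIntegral fun ζ i j => by ring
  have hFe : e_d t ⬝ᵥ (F *ᵥ e_d t) = -y t ^ 2 - (u t ^ 2 - y t ^ 2) / 2 := by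
    rw [hF, sub_mulVec, neg_mulVec, dotProduct_sub, dotProduct_neg,
      dotProduct_vecMulVec_self_mulVec, dotProduct_mulVec_intervalIntegral_deriv_mul hΦ,
      ← huin, ← hC, ← hy]
  have hpower : deriv x_d t ⬝ᵥ (Q *ᵥ x_d t) = (u t ^ 2 - y t ^ 2) / 2 := by
    calc deriv x_d t ⬝ᵥ (Q *ᵥ x_d t) = e_d t ⬝ᵥ (E *ᵥ deriv x_d t) := by
          rw [← hconstit, hEsymm.dotProduct_mulVec_comm]
      _ = e_d t ⬝ᵥ (F *ᵥ e_d t) + u t * u t := by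
          rw [hdyn, dotProduct_add, dotProduct_smul, smul_eq_mul, hB,
            dotProduct_comm (e_d t) (Φ b), ← huin]
      _ = (u t ^ 2 - y t ^ 2) / 2 := by rw [hFe]; ring
  exact ((hx_d t).hasDerivAt.dotProduct_mulVec_self hQsymm).const_mul (1 / 2 : ℝ) |>.congr_deriv
    (by rw [hpower]; ring)

open Matrix in
/-- The finite element discretization of the one-dimensional transport equation
(velocity direction `c = -1`) preserves the scattering energy preserving structure:
the discretized Hamiltonian `H_d = (1/2) x_dᵀ Q x_d` satisfies
`Ḣ_d = (1/2)(u² - y²)`. -/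
theorem fem_transport1d_discrete_scattering_energy_balance
    (N : ℕ) (a b : ℝ) (hab : a < b)
    (Φ : ℝ → Fin N → ℝ) (hΦ : ContDiff ℝ 1 Φ)
    (𝓗 : ℝ → ℝ) (h𝓗cont : Continuous 𝓗)
    (h𝓗pos : ∀ ζ ∈ Set.Icc a b, 0 < 𝓗 ζ)
    (E F Q : Matrix (Fin N) (Fin N) ℝ) (B C : Fin N → ℝ)
    (hE : E = Matrix.of fun i j => ∫ ζ in a..b, Φ ζ i * Φ ζ j)
    (hF : F = -vecMulVec (Φ a) (Φ a)
        - Matrix.of fun i j => ∫ ζ in a..b, deriv Φ ζ i * Φ ζ j)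
    (hQ : Q = Matrix.of fun i j => ∫ ζ in a..b, Φ ζ i * 𝓗 ζ * Φ ζ j)
    (hB : B = Φ b) (hC : C = Φ a)
    (x_d e_d : ℝ → Fin N → ℝ) (u y : ℝ → ℝ)
    (hx_d : Differentiable ℝ x_d) (he_d : Differentiable ℝ e_d)
    (hu : Differentiable ℝ u)
    (hdyn : ∀ t : ℝ, E *ᵥ deriv x_d t = F *ᵥ e_d t + u t • B)
    (hconstit : ∀ t : ℝ, E *ᵥ e_d t = Q *ᵥ x_d t)
    (huin : ∀ t : ℝ, u t = Φ b ⬝ᵥ e_d t)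
    (hy : ∀ t : ℝ, y t = C ⬝ᵥ e_d t) :
    ∀ t : ℝ, HasDerivAt (fun s => (1 / 2) * (x_d s ⬝ᵥ (Q *ᵥ x_d s)))
      ((1 / 2) * ((u t) ^ 2 - (y t) ^ 2)) t :=
  fem_transport1d_discrete_scattering_energy_balance_general N a b Φ hΦ 𝓗 E F Q B C hE hF hQ hB hC
    x_d e_d u y hx_d hdyn hconstit huin hy
end

section
/- Let Ω = [0,L₁] × [0,L₂] be a rectangle, let c = (c₁,c₂) : ℝ² → ℝ² and Φ : ℝ² → ℝ^N (with components φ₁,…,φ_N) be continuously differentiable. Define the N × N matrices F₁ with entries (F₁)_{ij} = -∬_Ω φᵢ(ζ) div(c φⱼ)(ζ) dζ, Q_c = ∬_Ω Φ(ζ) div(c)(ζ) Φ(ζ)ᵀ dζ, and S = ∫₀^{L₂} Φ(L₁,ζ₂)Φ(L₁,ζ₂)ᵀ c₁(L₁,ζ₂) dζ₂ - ∫₀^{L₂} Φ(0,ζ₂)Φ(0,ζ₂)ᵀ c₁(0,ζ₂) dζ₂ + ∫₀^{L₁} Φ(ζ₁,L₂)Φ(ζ₁,L₂)ᵀ c₂(ζ₁,L₂)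 dζ₁ - ∫₀^{L₁} Φ(ζ₁,0)Φ(ζ₁,0)ᵀ c₂(ζ₁,0) dζ₁ (the boundary matrix ∮_Γ ΦΦᵀ cᵀn ds). Then F₁ + F₁ᵀ = -Q_c - S. -/
/-!
By the product rule, `φᵢ div(c φⱼ) + φⱼ div(c φᵢ) = φᵢ div(c) φⱼ + div(φᵢ φⱼ c)` pointwise.
Integrated over the rectangle, the last term becomes the boundary flux `∮_Γ φᵢ φⱼ cᵀn ds` by the
divergence theorem.
-/

open MeasureTheory

noncomputable section

def partialFst (u : ℝ × ℝ → ℝ) (z : ℝ × ℝ) : ℝ := deriv (fun s => u (s, z.2)) z.1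

def partialSnd (u : ℝ × ℝ → ℝ) (z : ℝ × ℝ) : ℝ := deriv (fun s => u (z.1, s)) z.2

def divergence₂ (u v : ℝ × ℝ → ℝ) : ℝ × ℝ → ℝ := partialFst u + partialSnd v

def rectIntegral (a₁ b₁ a₂ b₂ : ℝ) (F : ℝ × ℝ → ℝ) : ℝ :=
  ∫ x in a₁..b₁, ∫ y in a₂..b₂, F (x, y)

end

section PartialDerivatives

variable {u v : ℝ × ℝ → ℝ} {z : ℝ × ℝ}

theorem partialFst_eq_fderiv (hu : DifferentiableAt ℝ u z) :
    partialFst u z = fderiv ℝ u z (1, 0) :=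
  (hu.hasFDerivAt.comp_hasDerivAt z.1
    ((hasDerivAt_id z.1).prodMk (hasDerivAt_const z.1 z.2))).deriv

theorem partialSnd_eq_fderiv (hu : DifferentiableAt ℝ u z) :
    partialSnd u z = fderiv ℝ u z (0, 1) :=
  (hu.hasFDerivAt.comp_hasDerivAt z.2
    ((hasDerivAt_const z.2 z.1).prodMk (hasDerivAt_id z.2))).deriv

theorem partialFst_mul (hu : DifferentiableAt ℝ u z) (hv : DifferentiableAt ℝ v z) :
    partialFst (u * v) z = partialFst u z * v z + u z * partialFst v z := by
  have hslice : ∀ w : ℝ × ℝ → ℝ, DifferentiableAt ℝ w z →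
      DifferentiableAt ℝ (fun s => w (s, z.2)) z.1 := fun w hw => by fun_prop
  exact deriv_mul (hslice u hu) (hslice v hv)

theorem partialSnd_mul (hu : DifferentiableAt ℝ u z) (hv : DifferentiableAt ℝ v z) :
    partialSnd (u * v) z = partialSnd u z * v z + u z * partialSnd v z := by
  have hslice : ∀ w : ℝ × ℝ → ℝ, DifferentiableAt ℝ w z →
      DifferentiableAt ℝ (fun s => w (z.1, s)) z.2 := fun w hw => by fun_prop
  exact deriv_mul (hslice u hu) (hslice v hv)

theorem divergence₂_eq_fderiv (hu : Differentiable ℝ u) (hv : Differentiable ℝ v) :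
    divergence₂ u v = fun z => fderiv ℝ u z (1, 0) + fderiv ℝ v z (0, 1) :=
  funext fun z => by
    rw [divergence₂, Pi.add_apply, partialFst_eq_fderiv (hu z), partialSnd_eq_fderiv (hv z)]

theorem ContDiff.continuous_divergence₂ (hu : ContDiff ℝ 1 u) (hv : ContDiff ℝ 1 v) :
    Continuous (divergence₂ u v) := by
  rw [divergence₂_eq_fderiv (hu.differentiable one_ne_zero) (hv.differentiable one_ne_zero)]
  exact ((hu.continuous_fderiv one_ne_zero).clm_apply continuous_const).add
    ((hv.continuous_fderiv one_ne_zero).clm_apply continuous_const)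

end PartialDerivatives

section RectIntegral

variable (a₁ b₁ a₂ b₂ : ℝ)

theorem rectIntegral_add {F G : ℝ × ℝ → ℝ} (hF : Continuous F) (hG : Continuous G) :
    rectIntegral a₁ b₁ a₂ b₂ (F + G) =
      rectIntegral a₁ b₁ a₂ b₂ F + rectIntegral a₁ b₁ a₂ b₂ G := by
  have hinner : ∀ H : ℝ × ℝ → ℝ, Continuous H →
      IntervalIntegrable (fun x => ∫ y in a₂..b₂, H (x, y)) volume a₁ b₁ := fun H hH =>
    (intervalIntegral.continuous_parametric_intervalIntegral_of_continuous'
      (f := fun x y => H (x, y)) (by fun_prop) a₂ b₂).intervalIntegrable _ _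
  have hslice : ∀ x, ∫ y in a₂..b₂, (F + G) (x, y) =
      (∫ y in a₂..b₂, F (x, y)) + ∫ y in a₂..b₂, G (x, y) := fun x =>
    intervalIntegral.integral_add (by apply Continuous.intervalIntegrable; fun_prop)
      (by apply Continuous.intervalIntegrable; fun_prop)
  simp only [rectIntegral, hslice]
  exact intervalIntegral.integral_add (hinner F hF) (hinner G hG)

theorem rectIntegral_divergence₂ {u v : ℝ × ℝ → ℝ} (hu : ContDiff ℝ 1 u) (hv : ContDiff ℝ 1 v) :
    rectIntegral a₁ b₁ a₂ b₂ (divergence₂ u v) =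
      (∫ y in a₂..b₂, u (b₁, y)) - (∫ y in a₂..b₂, u (a₁, y))
        + (∫ x in a₁..b₁, v (x, b₂)) - ∫ x in a₁..b₁, v (x, a₂) := by
  have Du := hu.differentiable one_ne_zero
  have Dv := hv.differentiable one_ne_zero
  have hcont := hu.continuous_divergence₂ hv
  rw [divergence₂_eq_fderiv Du Dv] at hcont
  have hdiv := integral2_divergence_prod_of_hasFDerivAt u v (fderiv ℝ u) (fderiv ℝ v)
    a₁ a₂ b₁ b₂ hu.continuous.continuousOn hv.continuous.continuousOn
    (fun z _ => (Du z).hasFDerivAt) (fun z _ => (Dv z).hasFDerivAt)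
    (hcont.continuousOn.integrableOn_compact (isCompact_uIcc.prod isCompact_uIcc))
  simp only [rectIntegral, divergence₂_eq_fderiv Du Dv, hdiv]
  ring

end RectIntegral

section SymmetrizedTransport

variable {c₁ c₂ f g : ℝ × ℝ → ℝ}

theorem mul_divergence₂_add_mul_divergence₂ (hc₁ : Differentiable ℝ c₁)
    (hc₂ : Differentiable ℝ c₂) (hf : Differentiable ℝ f) (hg : Differentiable ℝ g) :
    f * divergence₂ (c₁ * g) (c₂ * g) + g * divergence₂ (c₁ * f) (c₂ * f)
      = f * divergence₂ c₁ c₂ * g + divergence₂ (f * g * c₁) (f * g * c₂) := by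
  funext z
  have hfg : DifferentiableAt ℝ (f * g) z := (hf z).mul (hg z)
  simp only [divergence₂, Pi.add_apply, Pi.mul_apply, partialFst_mul (hc₁ z) (hg z),
    partialFst_mul (hc₁ z) (hf z), partialSnd_mul (hc₂ z) (hg z), partialSnd_mul (hc₂ z) (hf z),
    partialFst_mul hfg (hc₁ z), partialSnd_mul hfg (hc₂ z), partialFst_mul (hf z) (hg z),
    partialSnd_mul (hf z) (hg z)]
  ring

theorem rectIntegral_mul_divergence₂_add_mul_divergence₂ (a₁ b₁ a₂ b₂ : ℝ)
    (hc₁ : ContDiff ℝ 1 c₁) (hc₂ : ContDiff ℝ 1 c₂) (hf : ContDiff ℝ 1 f) (hg : ContDiff ℝ 1 g) :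
    rectIntegral a₁ b₁ a₂ b₂ (f * divergence₂ (c₁ * g) (c₂ * g))
      + rectIntegral a₁ b₁ a₂ b₂ (g * divergence₂ (c₁ * f) (c₂ * f))
      = rectIntegral a₁ b₁ a₂ b₂ (f * divergence₂ c₁ c₂ * g)
        + ((∫ y in a₂..b₂, f (b₁, y) * g (b₁, y) * c₁ (b₁, y))
          - (∫ y in a₂..b₂, f (a₁, y) * g (a₁, y) * c₁ (a₁, y))
          + (∫ x in a₁..b₁, f (x, b₂) * g (x, b₂) * c₂ (x, b₂))
          - ∫ x in a₁..b₁, f (x, a₂) * g (x, a₂) * c₂ (x, a₂)) := by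
  have hfg : ContDiff ℝ 1 (f * g) := hf.mul hg
  rw [← rectIntegral_add _ _ _ _ ?E₁ ?E₂,
    mul_divergence₂_add_mul_divergence₂ (hc₁.differentiable one_ne_zero)
      (hc₂.differentiable one_ne_zero) (hf.differentiable one_ne_zero)
      (hg.differentiable one_ne_zero),
    rectIntegral_add _ _ _ _ ?E₃ ?E₄,
    rectIntegral_divergence₂ _ _ _ _ (u := f * g * c₁) (v := f * g * c₂)
      (hfg.mul hc₁) (hfg.mul hc₂)]
  · rfl
  case E₁ => exact hf.continuous.mul ((hc₁.mul hg).continuous_divergence₂ (hc₂.mul hg))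
  case E₂ => exact hg.continuous.mul ((hc₁.mul hf).continuous_divergence₂ (hc₂.mul hf))
  case E₃ => exact (hf.continuous.mul (hc₁.continuous_divergence₂ hc₂)).mul hg.continuous
  case E₄ => exact (hfg.mul hc₁).continuous_divergence₂ (hfg.mul hc₂)

end SymmetrizedTransport

open Matrix in
theorem fem_transport2d_F1_plus_F1transpose_general
    (N : ℕ) (L₁ L₂ : ℝ)
    (c : ℝ × ℝ → ℝ × ℝ) (hc : ContDiff ℝ 1 c)
    (Φ : ℝ × ℝ → Fin N → ℝ) (hΦ : ContDiff ℝ 1 Φ)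
    (F₁ Qc S : Matrix (Fin N) (Fin N) ℝ)
    (hF₁ : F₁ = Matrix.of fun i j => -∫ ζ₁ in (0:ℝ)..L₁, ∫ ζ₂ in (0:ℝ)..L₂,
        Φ (ζ₁, ζ₂) i * (deriv (fun s => (c (s, ζ₂)).1 * Φ (s, ζ₂) j) ζ₁
          + deriv (fun s => (c (ζ₁, s)).2 * Φ (ζ₁, s) j) ζ₂))
    (hQc : Qc = Matrix.of fun i j => ∫ ζ₁ in (0:ℝ)..L₁, ∫ ζ₂ in (0:ℝ)..L₂,
        Φ (ζ₁, ζ₂) i *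
          (deriv (fun s => (c (s, ζ₂)).1) ζ₁ + deriv (fun s => (c (ζ₁, s)).2) ζ₂)
          * Φ (ζ₁, ζ₂) j)
    (hS : S = Matrix.of fun i j =>
        (∫ ζ₂ in (0:ℝ)..L₂, Φ (L₁, ζ₂) i * Φ (L₁, ζ₂) j * (c (L₁, ζ₂)).1)
        - (∫ ζ₂ in (0:ℝ)..L₂, Φ (0, ζ₂) i * Φ (0, ζ₂) j * (c (0, ζ₂)).1)
        + (∫ ζ₁ in (0:ℝ)..L₁, Φ (ζ₁, L₂) i * Φ (ζ₁, L₂) j * (c (ζ₁, L₂)).2)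
        - (∫ ζ₁ in (0:ℝ)..L₁, Φ (ζ₁, 0) i * Φ (ζ₁, 0) j * (c (ζ₁, 0)).2)) :
    F₁ + F₁ᵀ = -Qc - S := by
  subst hF₁ hQc hS
  ext i j
  have h := rectIntegral_mul_divergence₂_add_mul_divergence₂ 0 L₁ 0 L₂
    (c₁ := fun z => (c z).1) (c₂ := fun z => (c z).2)
    (contDiff_fst.comp hc) (contDiff_snd.comp hc) (contDiff_pi.mp hΦ i) (contDiff_pi.mp hΦ j)
  simp only [rectIntegral, divergence₂, partialFst, partialSnd, Pi.mul_apply, Pi.add_apply] at h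
  simp only [Matrix.add_apply, transpose_apply, of_apply, Matrix.sub_apply, Matrix.neg_apply]
  linarith

open Matrix in
/-- For the 2D FEM of the transport equation on the rectangle `Ω = [0,L₁] × [0,L₂]`,
the stiffness matrix `(F₁)_{ij} = -∬_Ω φᵢ div(c φⱼ) dζ` satisfies
`F₁ + F₁ᵀ = -Q_c - S` where `Q_c = ∬_Ω Φ div(c) Φᵀ dζ` and `S = ∮_Γ ΦΦᵀ cᵀn ds`. -/
theorem fem_transport2d_F1_plus_F1transpose
    (N : ℕ) (L₁ L₂ : ℝ) (hL₁ : 0 < L₁) (hL₂ : 0 < L₂)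
    (c : ℝ × ℝ → ℝ × ℝ) (hc : ContDiff ℝ 1 c)
    (Φ : ℝ × ℝ → Fin N → ℝ) (hΦ : ContDiff ℝ 1 Φ)
    (F₁ Qc S : Matrix (Fin N) (Fin N) ℝ)
    (hF₁ : F₁ = Matrix.of fun i j => -∫ ζ₁ in (0:ℝ)..L₁, ∫ ζ₂ in (0:ℝ)..L₂,
        Φ (ζ₁, ζ₂) i * (deriv (fun s => (c (s, ζ₂)).1 * Φ (s, ζ₂) j) ζ₁
          + deriv (fun s => (c (ζ₁, s)).2 * Φ (ζ₁, s) j) ζ₂))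
    (hQc : Qc = Matrix.of fun i j => ∫ ζ₁ in (0:ℝ)..L₁, ∫ ζ₂ in (0:ℝ)..L₂,
        Φ (ζ₁, ζ₂) i *
          (deriv (fun s => (c (s, ζ₂)).1) ζ₁ + deriv (fun s => (c (ζ₁, s)).2) ζ₂)
          * Φ (ζ₁, ζ₂) j)
    (hS : S = Matrix.of fun i j =>
        (∫ ζ₂ in (0:ℝ)..L₂, Φ (L₁, ζ₂) i * Φ (L₁, ζ₂) j * (c (L₁, ζ₂)).1)
        - (∫ ζ₂ in (0:ℝ)..L₂, Φ (0, ζ₂) i * Φ (0, ζ₂) j * (c (0, ζ₂)).1)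
        + (∫ ζ₁ in (0:ℝ)..L₁, Φ (ζ₁, L₂) i * Φ (ζ₁, L₂) j * (c (ζ₁, L₂)).2)
        - (∫ ζ₁ in (0:ℝ)..L₁, Φ (ζ₁, 0) i * Φ (ζ₁, 0) j * (c (ζ₁, 0)).2)) :
    F₁ + F₁ᵀ = -Qc - S :=
  fem_transport2d_F1_plus_F1transpose_general N L₁ L₂ c hc Φ hΦ F₁ Qc S hF₁ hQc hS
end
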